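/- If A and B are complex Hadamard matrices of order n, then the block matrix [[A, D B],[A, -D B]] is a complex Hadamard matrix of order 2n for any diagonal unitary matrix D with unimodular diagonal entries. -/

import Mathlib

open Complex Finset

/-- A complex Hadamard matrix (over an arbitrary finite index type):
unimodular entries and pairwise orthogonal columns. -/
def IsCHM {I : Type} [Fintype I] (H : Matrix I I ℂ) : Prop :=
  (∀ i j, ‖H i j‖ = 1) ∧
  ∀ j k, j ≠ k → ∑ i, (starRingEnd ℂ) (H i j) * H i k = 0

/-!
Multiplying the rows of a complex Hadamard matrix by unimodular scalars keeps it Hadamard, since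
`conj (d * x) * (d * y) = conj x * y` when `‖d‖ = 1`; so `D B` is Hadamard and it suffices to treat
`[[A, C], [A, -C]]` for Hadamard `A` and `C`. There two columns from the same block have inner
product twice that of the corresponding columns of `A` or `C`, while the two halves of a column
from the right block cancel against any column from the left block.
-/

/-- The block matrix `[[A, C], [A, -C]]`, with the first component of an index naming the block
(`false` for the top row and left column of blocks). -/
def ditaBlock {I : Type} (A C : Matrix I I ℂ) : Matrix (Bool × I) (Bool × I) ℂ :=
  fun p q => if q.1 = false then A p.2 q.2 else if p.1 = false then C p.2 q.2 else -C p.2 q.2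

lemma conj_mul_self_of_norm_eq_one {z : ℂ} (hz : ‖z‖ = 1) : (starRingEnd ℂ) z * z = 1 := by
  rw [conj_mul', hz]
  norm_num

lemma conj_mul_mul_cancel_of_norm_eq_one {d : ℂ} (hd : ‖d‖ = 1) (x y : ℂ) :
    (starRingEnd ℂ) (d * x) * (d * y) = (starRingEnd ℂ) x * y := by
  rw [map_mul]
  linear_combination ((starRingEnd ℂ) x * y) * conj_mul_self_of_norm_eq_one hd

namespace IsCHM

variable {I : Type} [Fintype I]

theorem diagonal_mul [DecidableEq I] {B : Matrix I I ℂ} (hB : IsCHM B) {D : I → ℂ}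
    (hD : ∀ i, ‖D i‖ = 1) : IsCHM (Matrix.diagonal D * B) := by
  refine ⟨fun i j => ?_, fun j k hjk => ?_⟩
  · rw [Matrix.diagonal_mul, norm_mul, hD, hB.1, one_mul]
  · simp only [Matrix.diagonal_mul, conj_mul_mul_cancel_of_norm_eq_one (hD _)]
    exact hB.2 j k hjk

theorem ditaBlock {A C : Matrix I I ℂ} (hA : IsCHM A) (hC : IsCHM C) :
    IsCHM (ditaBlock A C) := by
  refine ⟨fun ⟨b, i⟩ ⟨c, j⟩ => ?_, fun ⟨c, j⟩ ⟨c', k⟩ hne => ?_⟩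
  · cases b <;> cases c <;> simp [_root_.ditaBlock, hA.1, hC.1]
  · rw [Fintype.sum_prod_type, Fintype.sum_bool]
    cases c <;> cases c' <;> simp only [_root_.ditaBlock, Bool.true_eq_false, if_true, if_false,
      map_neg, neg_mul, mul_neg, neg_neg, sum_neg_distrib]
    · rw [hA.2 j k fun h => hne (h ▸ rfl), add_zero]
    · rw [neg_add_cancel]
    · rw [neg_add_cancel]
    · rw [hC.2 j k fun h => hne (h ▸ rfl), add_zero]

end IsCHM

/-- if `A`, `B` are complex Hadamard matrices of order `n` and `D` is a
diagonal unitary matrix with unimodular diagonal entries, then the block matrix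
`[[A, DB], [A, -DB]]` is a complex Hadamard matrix of order `2n`. -/
theorem dita_block_construction (n : ℕ)
    (A B : Matrix (Fin n) (Fin n) ℂ) (hA : IsCHM A) (hB : IsCHM B)
    (D : Fin n → ℂ) (hD : ∀ i, ‖D i‖ = 1)
    (M : Matrix (Bool × Fin n) (Bool × Fin n) ℂ)
    (hM : ∀ (b : Bool) (i : Fin n) (c : Bool) (j : Fin n),
      M (b, i) (c, j) =
        if c = false then A i j
        else if b = false then D i * B i j else -(D i * B i j)) :
    IsCHM M := by
  have hM_eq : M = ditaBlock A (Matrix.diagonal D * B) := by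
    ext ⟨b, i⟩ ⟨c, j⟩
    simp only [hM, ditaBlock, Matrix.diagonal_mul]
  exact hM_eq ▸ hA.ditaBlock (hB.diagonal_mul hD)
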